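/- arXiv:2512.17830 — 6 statements merged into one kernel-verified Lean document; each statement's English description precedes it below -/
import Mathlib

section
/- The 4×4 matrix R₊(a,b,c,d) = a·P₊ + d·A₊ + c·N₊ + b·N₊′, given explicitly (in the lexicographic basis e₁₁,e₁₂,e₂₁,e₂₂ of ℂ²⊗ℂ²) by rows [a,b,c,d],[c,d,a,b],[b,a,d,c],[d,c,b,a], satisfies the constant Yang–Baxter (braid) equation (R⊗I)(I⊗R)(R⊗I) = (I⊗R)(R⊗I)(I⊗R) on ℂ²⊗ℂ²⊗ℂ² for all complex values of a,b,c,d. -/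
set_option maxHeartbeats 2000000

open Matrix Complex

abbrev V2 : Type := Fin 2 × Fin 2
abbrev V3 : Type := Fin 2 × Fin 2 × Fin 2

/-- identify the pair `(i,j)` with `2*i+j` (lexicographic basis `e₁₁,e₁₂,e₂₁,e₂₂`). -/
def toFin4 (p : V2) : Fin 4 := ⟨2 * p.1.val + p.2.val, by omega⟩

/-- view a 4×4 matrix as an operator on `ℂ² ⊗ ℂ²`. -/
def lift4 (M : Matrix (Fin 4) (Fin 4) ℂ) : Matrix V2 V2 ℂ :=
  fun i j => M (toFin4 i) (toFin4 j)

/-- `M ⊗ I₂` : `M` acting on the first two tensor factors of `ℂ²⊗ℂ²⊗ℂ²`. -/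
def amp1 (M : Matrix V2 V2 ℂ) : Matrix V3 V3 ℂ :=
  fun i j => M (i.1, i.2.1) (j.1, j.2.1) * (if i.2.2 = j.2.2 then 1 else 0)

/-- `I₂ ⊗ M` : `M` acting on the last two tensor factors of `ℂ²⊗ℂ²⊗ℂ²`. -/
def amp2 (M : Matrix V2 V2 ℂ) : Matrix V3 V3 ℂ :=
  fun i j => (if i.1 = j.1 then (1:ℂ) else 0) * M (i.2.1, i.2.2) (j.2.1, j.2.2)

/-- the constant Yang–Baxter (braid) equation `R₁R₂R₁ = R₂R₁R₂`. -/
def Braid (M : Matrix V2 V2 ℂ) : Prop :=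
  amp1 M * amp2 M * amp1 M = amp2 M * amp1 M * amp2 M

/-- a closed-form description of the matrix `R₊`. -/
def Rm (a b c d : ℂ) : Matrix V2 V2 ℂ := fun p q =>
  if p.2 = q.1 then (if p.1 = q.2 then a else b) else (if p.1 = q.2 then c else d)

lemma lift4_eq (a b c d : ℂ) :
    lift4 !![a,b,c,d; c,d,a,b; b,a,d,c; d,c,b,a] = Rm a b c d := by
  ext ⟨i1, i2⟩ ⟨j1, j2⟩
  fin_cases i1 <;> fin_cases i2 <;> fin_cases j1 <;> fin_cases j2 <;>
    simp [lift4, toFin4, Rm]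

lemma braid_Rm (a b c d : ℂ) : Braid (Rm a b c d) := by
  unfold Braid
  ext ⟨i1, i2, i3⟩ ⟨j1, j2, j3⟩
  simp only [Matrix.mul_apply, Fintype.sum_prod_type, Fin.sum_univ_two, amp1, amp2, Rm]
  fin_cases i1 <;> fin_cases i2 <;> fin_cases i3 <;>
    fin_cases j1 <;> fin_cases j2 <;> fin_cases j3 <;>
  · norm_num
    ring

theorem manji_R_plus_satisfies_YBE (a b c d : ℂ) :
    Braid (lift4 !![a,b,c,d; c,d,a,b; b,a,d,c; d,c,b,a]) := by
  rw [lift4_eq]; exact braid_Rm a b c d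
end

section
/- Let R and S be the 4×4 matrices R = [[1,q,−q,−q²],[0,0,1,q],[0,1,0,−q],[0,0,0,1]] and S = [[1,s,−s,−s²],[0,0,1,s],[0,1,0,−s],[0,0,0,1]] for arbitrary complex q, s. Then R² = S² = I₄, both R and S satisfy the braid equation, and the pair satisfies the mixed loop-braid relations R₁R₂S₁ = S₂R₁R₂ and R₁S₂S₁ = S₂S₁R₂ (where X₁ = X⊗I₂, X₂ = I₂⊗X as 8×8 matrices). -/
open Matrix Complex

set_option maxHeartbeats 4000000 in
lemma aux_sq (q : ℂ) :
    lift4 !![1,q,-q,-q^2; 0,0,1,q; 0,1,0,-q; 0,0,0,1] *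
    lift4 !![1,q,-q,-q^2; 0,0,1,q; 0,1,0,-q; 0,0,0,1] = 1 := by
  ext ⟨i,j⟩ ⟨k,l⟩
  fin_cases i <;> fin_cases j <;> fin_cases k <;> fin_cases l <;>
    simp [Matrix.mul_apply, Fintype.sum_prod_type, Fin.sum_univ_two, lift4, toFin4,
      Matrix.one_apply, Matrix.vecHead, Matrix.vecTail, Prod.ext_iff] <;> ring

set_option maxHeartbeats 8000000 in
lemma aux_braid (q : ℂ) : Braid (lift4 !![1,q,-q,-q^2; 0,0,1,q; 0,1,0,-q; 0,0,0,1]) := by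
  unfold Braid
  ext ⟨i,j,k⟩ ⟨a,b,c⟩
  fin_cases i <;> fin_cases j <;> fin_cases k <;> fin_cases a <;> fin_cases b <;> fin_cases c <;>
    simp [Matrix.mul_apply, Fintype.sum_prod_type, Fin.sum_univ_two, lift4, toFin4, amp1, amp2,
      Matrix.vecHead, Matrix.vecTail] <;> ring

set_option maxHeartbeats 8000000 in
lemma aux_mix1 (q s : ℂ) :
    amp1 (lift4 !![1,q,-q,-q^2; 0,0,1,q; 0,1,0,-q; 0,0,0,1]) *
    amp2 (lift4 !![1,q,-q,-q^2; 0,0,1,q; 0,1,0,-q; 0,0,0,1]) *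
    amp1 (lift4 !![1,s,-s,-s^2; 0,0,1,s; 0,1,0,-s; 0,0,0,1]) =
    amp2 (lift4 !![1,s,-s,-s^2; 0,0,1,s; 0,1,0,-s; 0,0,0,1]) *
    amp1 (lift4 !![1,q,-q,-q^2; 0,0,1,q; 0,1,0,-q; 0,0,0,1]) *
    amp2 (lift4 !![1,q,-q,-q^2; 0,0,1,q; 0,1,0,-q; 0,0,0,1]) := by
  ext ⟨i,j,k⟩ ⟨a,b,c⟩
  fin_cases i <;> fin_cases j <;> fin_cases k <;> fin_cases a <;> fin_cases b <;> fin_cases c <;>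
    simp [Matrix.mul_apply, Fintype.sum_prod_type, Fin.sum_univ_two, lift4, toFin4, amp1, amp2,
      Matrix.vecHead, Matrix.vecTail] <;> ring

set_option maxHeartbeats 8000000 in
lemma aux_mix2 (q s : ℂ) :
    amp1 (lift4 !![1,q,-q,-q^2; 0,0,1,q; 0,1,0,-q; 0,0,0,1]) *
    amp2 (lift4 !![1,s,-s,-s^2; 0,0,1,s; 0,1,0,-s; 0,0,0,1]) *
    amp1 (lift4 !![1,s,-s,-s^2; 0,0,1,s; 0,1,0,-s; 0,0,0,1]) =
    amp2 (lift4 !![1,s,-s,-s^2; 0,0,1,s; 0,1,0,-s; 0,0,0,1]) *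
    amp1 (lift4 !![1,s,-s,-s^2; 0,0,1,s; 0,1,0,-s; 0,0,0,1]) *
    amp2 (lift4 !![1,q,-q,-q^2; 0,0,1,q; 0,1,0,-q; 0,0,0,1]) := by
  ext ⟨i,j,k⟩ ⟨a,b,c⟩
  fin_cases i <;> fin_cases j <;> fin_cases k <;> fin_cases a <;> fin_cases b <;> fin_cases c <;>
    simp [Matrix.mul_apply, Fintype.sum_prod_type, Fin.sum_univ_two, lift4, toFin4, amp1, amp2,
      Matrix.vecHead, Matrix.vecTail] <;> ring

theorem fglue_pair_MD_relations (q s : ℂ) :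
    let R := lift4 !![1,q,-q,-q^2; 0,0,1,q; 0,1,0,-q; 0,0,0,1]
    let S := lift4 !![1,s,-s,-s^2; 0,0,1,s; 0,1,0,-s; 0,0,0,1]
    R * R = 1 ∧ S * S = 1 ∧ Braid R ∧ Braid S ∧
    amp1 R * amp2 R * amp1 S = amp2 S * amp1 R * amp2 R ∧
    amp1 R * amp2 S * amp1 S = amp2 S * amp1 S * amp2 R := by
  exact ⟨aux_sq q, aux_sq s, aux_braid q, aux_braid s, aux_mix1 q s, aux_mix2 q s⟩
end

section
/- Let R = [[1,0,0,p],[0,0,1,0],[0,1,0,0],[0,0,0,−1]] and S = [[1,0,0,q],[0,0,1,0],[0,1,0,0],[0,0,0,−1]] for arbitrary complex p, q. Then R² = S² = I₄, both satisfy the braid equation, and the mixed relations R₁R₂S₁ = S₂R₁R₂ and R₁S₂S₁ = S₂S₁R₂ hold (X₁ = X⊗I₂, X₂ = I₂⊗X). -/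
open Matrix Complex

set_option maxHeartbeats 8000000 in
set_option linter.unreachableTactic false in
set_option linter.unusedTactic false in
theorem aglue_pair_MD_relations (p q : ℂ) :
    let R := lift4 !![1,0,0,p; 0,0,1,0; 0,1,0,0; 0,0,0,-1]
    let S := lift4 !![1,0,0,q; 0,0,1,0; 0,1,0,0; 0,0,0,-1]
    R * R = 1 ∧ S * S = 1 ∧ Braid R ∧ Braid S ∧
    amp1 R * amp2 R * amp1 S = amp2 S * amp1 R * amp2 R ∧
    amp1 R * amp2 S * amp1 S = amp2 S * amp1 S * amp2 R := by
  refine ⟨?_, ?_, ?_, ?_, ?_, ?_⟩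
  · ext ⟨a,b⟩ ⟨c,d⟩
    fin_cases a <;> fin_cases b <;> fin_cases c <;> fin_cases d <;>
      simp [Matrix.mul_apply, Fintype.sum_prod_type, Fin.sum_univ_two, lift4, toFin4,
        Matrix.one_apply, Prod.ext_iff, Matrix.vecHead, Matrix.vecTail]
  · ext ⟨a,b⟩ ⟨c,d⟩
    fin_cases a <;> fin_cases b <;> fin_cases c <;> fin_cases d <;>
      simp [Matrix.mul_apply, Fintype.sum_prod_type, Fin.sum_univ_two, lift4, toFin4,
        Matrix.one_apply, Prod.ext_iff, Matrix.vecHead, Matrix.vecTail]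
  all_goals
    first
    | skip
  all_goals
    (try unfold Braid) <;>
    ext ⟨a,b,c⟩ ⟨d,e,f⟩ <;>
    fin_cases a <;> fin_cases b <;> fin_cases c <;> fin_cases d <;> fin_cases e <;> fin_cases f <;>
      simp [Matrix.mul_apply, Fintype.sum_prod_type, Fin.sum_univ_two, lift4, toFin4,
        amp1, amp2, Matrix.vecHead, Matrix.vecTail] <;> ring
end

section
/- Let q ≠ p be complex numbers and let X = [[1, p−q, q−p, −(q−p)²],[0,1,0,q−p],[0,0,1,p−q],[0,0,0,1]]. Then (X − I₄)³ = 0 but (X − I₄)² ≠ 0; consequently X is not diagonalizable and Xᵏ ≠ I₄ for all k ≥ 1. -/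
open Matrix

theorem fglue_X_unipotent_infinite_order (p q : ℂ) (hpq : q ≠ p) :
    let X : Matrix (Fin 4) (Fin 4) ℂ :=
      !![1, p - q, q - p, -(q - p)^2; 0, 1, 0, q - p; 0, 0, 1, p - q; 0, 0, 0, 1]
    (X - 1) ^ 3 = 0 ∧ (X - 1) ^ 2 ≠ 0 ∧ ∀ k : ℕ, 1 ≤ k → X ^ k ≠ 1 := by
  intro X
  have hqp : q - p ≠ 0 := sub_ne_zero.mpr hpq
  have hN : X - 1 = !![0, p - q, q - p, -(q - p)^2; 0, 0, 0, q - p; 0, 0, 0, p - q; 0, 0, 0, 0] := by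
    ext i j
    fin_cases i <;> fin_cases j <;>
      simp [X, Matrix.one_apply, Matrix.sub_apply, Matrix.vecHead, Matrix.vecTail]
  have hN2 : (X - 1) ^ 2 = !![0, 0, 0, -2*(q - p)^2; 0, 0, 0, 0; 0, 0, 0, 0; 0, 0, 0, 0] := by
    rw [pow_two, hN]
    ext i j
    fin_cases i <;> fin_cases j <;>
      · simp [Matrix.mul_apply, Fin.sum_univ_four, Matrix.vecHead, Matrix.vecTail]
        try ring
  refine ⟨?_, ?_, ?_⟩
  · rw [pow_succ, hN2, hN]
    ext i j
    fin_cases i <;> fin_cases j <;>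
      · simp [Matrix.mul_apply, Fin.sum_univ_four, Matrix.vecHead, Matrix.vecTail]
        try ring
  · intro h
    rw [hN2] at h
    have h2 := congrFun (congrFun h 0) 3
    simp [Matrix.vecHead, Matrix.vecTail] at h2
    exact hqp h2
  · intro k hk hX
    have key : ∀ n : ℕ, (X ^ n) 1 0 = 0 ∧ (X ^ n) 1 1 = 1 ∧ (X ^ n) 1 2 = 0 ∧
        (X ^ n) 1 3 = n * (q - p) := by
      intro n
      induction n with
      | zero => simp [Matrix.one_apply]
      | succ m ih =>
        obtain ⟨h0, h1, h2, h3⟩ := ih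
        rw [pow_succ]
        refine ⟨?_, ?_, ?_, ?_⟩ <;>
          · rw [Matrix.mul_apply, Fin.sum_univ_four, h0, h1, h2, h3]
            simp [X, Matrix.vecHead, Matrix.vecTail]
            try push_cast
            try ring
    have h13 : (X ^ k) 1 3 = k * (q - p) := (key k).2.2.2
    rw [hX] at h13
    rw [Matrix.one_apply_ne (by decide)] at h13
    rcases mul_eq_zero.mp h13.symm with h | h
    · exact absurd (Nat.cast_eq_zero.mp h) (by omega)
    · exact hqp h
end

section
/- Let ε, z, x ∈ ℂ with ε² = 1 and x² = z² + εz. Let R be the 4×4 anti-slash matrix [[0,0,0,1],[0,1,0,0],[0,0,1,0],[1,0,0,0]] and let S be the matrix with rows [z,−x,x,−ε−z], [x,−ε−z,z,−x], [−x,z,−ε−z,x], [−ε−z,x,−x,z]. Then R² = S² = I₄, both R and S satisfy the braid equation, and the mixed relations R₁R₂S₁ = S₂R₁R₂ and R₁S₂S₁ = S₂S₁R₂ hold (X₁ = X⊗I₂, X₂ = I₂⊗X). -/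
open Matrix Complex

set_option maxHeartbeats 4000000

lemma key1 (A B C : Matrix V2 V2 ℂ) (i j : V3) :
    (amp1 A * amp2 B * amp1 C) i j =
    ∑ k1 : Fin 2, ∑ k2 : Fin 2, ∑ q : Fin 2,
      A (i.1, i.2.1) (k1, q) * B (q, i.2.2) (k2, j.2.2) * C (k1, k2) (j.1, j.2.1) := by
  simp [Matrix.mul_apply, amp1, amp2, Fintype.sum_prod_type, mul_ite, ite_mul,
    Finset.sum_ite_eq, Finset.sum_ite_eq', Finset.mul_sum, Finset.sum_mul, mul_assoc,
    mul_comm, mul_left_comm]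
  ring

lemma key2 (A B C : Matrix V2 V2 ℂ) (i j : V3) :
    (amp2 A * amp1 B * amp2 C) i j =
    ∑ q : Fin 2, ∑ k2 : Fin 2, ∑ k3 : Fin 2,
      A (i.2.1, i.2.2) (q, k3) * B (i.1, q) (j.1, k2) * C (k2, k3) (j.2.1, j.2.2) := by
  simp [Matrix.mul_apply, amp1, amp2, Fintype.sum_prod_type, mul_ite, ite_mul,
    Finset.sum_ite_eq, Finset.sum_ite_eq', Finset.mul_sum, Finset.sum_mul, mul_assoc,
    mul_comm, mul_left_comm]
  ring

theorem antislash_pair_MD_relations (ε z x : ℂ) (hε : ε ^ 2 = 1)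
    (hx : x ^ 2 = z ^ 2 + ε * z) :
    let R := lift4 !![0,0,0,1; 0,1,0,0; 0,0,1,0; 1,0,0,0]
    let S := lift4 !![z, -x, x, -ε - z; x, -ε - z, z, -x; -x, z, -ε - z, x; -ε - z, x, -x, z]
    R * R = 1 ∧ S * S = 1 ∧ Braid R ∧ Braid S ∧
    amp1 R * amp2 R * amp1 S = amp2 S * amp1 R * amp2 R ∧
    amp1 R * amp2 S * amp1 S = amp2 S * amp1 S * amp2 R := by
  intro R S
  refine ⟨?_, ?_, ?_, ?_, ?_, ?_⟩
  · ext ⟨i,j⟩ ⟨k,l⟩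
    fin_cases i <;> fin_cases j <;> fin_cases k <;> fin_cases l <;>
      simp [R, Matrix.mul_apply, Fintype.sum_prod_type, Fin.sum_univ_two, lift4, toFin4,
        Matrix.one_apply, Prod.ext_iff, Matrix.vecHead, Matrix.vecTail]
  · ext ⟨i,j⟩ ⟨k,l⟩
    fin_cases i <;> fin_cases j <;> fin_cases k <;> fin_cases l <;>
      simp [S, Matrix.mul_apply, Fintype.sum_prod_type, Fin.sum_univ_two, lift4, toFin4,
        Matrix.one_apply, Prod.ext_iff, Matrix.vecHead, Matrix.vecTail] <;>
      first
        | linear_combination hx | linear_combination -hx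
        | linear_combination hε - 2*hx | linear_combination 2*hx - hε
        | linear_combination 2*hx | linear_combination -2*hx | ring
  · ext ⟨i,j,k⟩ ⟨a,b,c⟩
    rw [key1, key2]
    simp only [Fin.sum_univ_two]
    fin_cases i <;> fin_cases j <;> fin_cases k <;> fin_cases a <;> fin_cases b <;> fin_cases c <;>
      simp [R, lift4, toFin4, Matrix.vecHead, Matrix.vecTail]
  · ext ⟨i,j,k⟩ ⟨a,b,c⟩
    rw [key1, key2]
    simp only [Fin.sum_univ_two]
    fin_cases i <;> fin_cases j <;> fin_cases k <;> fin_cases a <;> fin_cases b <;> fin_cases c <;>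
      simp [S, lift4, toFin4, Matrix.vecHead, Matrix.vecTail] <;> ring
  · ext ⟨i,j,k⟩ ⟨a,b,c⟩
    rw [key1, key2]
    simp only [Fin.sum_univ_two]
    fin_cases i <;> fin_cases j <;> fin_cases k <;> fin_cases a <;> fin_cases b <;> fin_cases c <;>
      simp [R, S, lift4, toFin4, Matrix.vecHead, Matrix.vecTail]
  · ext ⟨i,j,k⟩ ⟨a,b,c⟩
    rw [key1, key2]
    simp only [Fin.sum_univ_two]
    fin_cases i <;> fin_cases j <;> fin_cases k <;> fin_cases a <;> fin_cases b <;> fin_cases c <;>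
      simp [R, S, lift4, toFin4, Matrix.vecHead, Matrix.vecTail] <;> ring
end

section
/- There is no invertible 2×2 complex matrix A such that (A⊗A) R (A⊗A)⁻¹ = R′ and (A⊗A) S (A⊗A)⁻¹ = S′, where R is the anti-slash matrix [[0,0,0,1],[0,1,0,0],[0,0,1,0],[1,0,0,0]], S is the matrix with rows [z,−x,x,1−z],[x,1−z,z,−x],[−x,z,1−z,x],[1−z,x,−x,z] with x² = z² − z and x ≠ 0, R′ is the flip [[1,0,0,0],[0,0,1,0],[0,1,0,0],[0,0,0,1]], and S′ = [[1,0,0,0],[0,0,λ,0],[0,1/λ,0,0],[0,0,0,1]] with λ = 1 − 2z + 2x. -/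
open Matrix Complex

/-- the Kronecker product of two 2×2 matrices, as an operator on ℂ²⊗ℂ². -/
def kron22 (A B : Matrix (Fin 2) (Fin 2) ℂ) : Matrix V2 V2 ℂ :=
  fun i j => A i.1 j.1 * B i.2 j.2

lemma kron22_mul (A B C D : Matrix (Fin 2) (Fin 2) ℂ) :
    kron22 A B * kron22 C D = kron22 (A * C) (B * D) := by
  ext ⟨i1, i2⟩ ⟨j1, j2⟩
  simp only [kron22, Matrix.mul_apply, Fintype.sum_prod_type, Finset.mul_sum,
    Finset.sum_mul]
  rw [Finset.sum_comm]
  apply Finset.sum_congr rfl; intro r1 _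
  apply Finset.sum_congr rfl; intro r2 _
  ring

lemma kron22_one : kron22 1 1 = (1 : Matrix V2 V2 ℂ) := by
  ext ⟨i1, i2⟩ ⟨j1, j2⟩
  simp [kron22, Matrix.one_apply, Prod.ext_iff]
  aesop

lemma flip_comm (A : Matrix (Fin 2) (Fin 2) ℂ) :
    lift4 !![1,0,0,0; 0,0,1,0; 0,1,0,0; 0,0,0,1] * kron22 A A
      = kron22 A A * lift4 !![1,0,0,0; 0,0,1,0; 0,1,0,0; 0,0,0,1] := by
  ext ⟨i1, i2⟩ ⟨j1, j2⟩
  fin_cases i1 <;> fin_cases i2 <;> fin_cases j1 <;> fin_cases j2 <;>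
    simp [Matrix.mul_apply, Fintype.sum_prod_type, Fin.sum_univ_succ, lift4, kron22,
      toFin4, Matrix.vecHead, Matrix.vecTail] <;> ring

theorem antislash_not_locally_equivalent_to_fslash (x z l : ℂ)
    (hx : x ^ 2 = z ^ 2 - z) (hx0 : x ≠ 0) (hl : l = 1 - 2 * z + 2 * x) :
    let R := lift4 !![0,0,0,1; 0,1,0,0; 0,0,1,0; 1,0,0,0]
    let S := lift4 !![z, -x, x, 1 - z; x, 1 - z, z, -x; -x, z, 1 - z, x; 1 - z, x, -x, z]
    let R' := lift4 !![1,0,0,0; 0,0,1,0; 0,1,0,0; 0,0,0,1]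
    let S' := lift4 !![1,0,0,0; 0,0,l,0; 0,1/l,0,0; 0,0,0,1]
    ¬ ∃ A : Matrix (Fin 2) (Fin 2) ℂ, IsUnit A ∧
        kron22 A A * R * (kron22 A A)⁻¹ = R' ∧
        kron22 A A * S * (kron22 A A)⁻¹ = S' := by
  intro R S R' S'
  rintro ⟨A, hA, h1, -⟩
  set K := kron22 A A with hK
  have hdet : IsUnit A.det := (Matrix.isUnit_iff_isUnit_det A).mp hA
  have hKr : K * kron22 A⁻¹ A⁻¹ = 1 := by
    rw [hK, kron22_mul, Matrix.mul_nonsing_inv A hdet, kron22_one]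
  have hKl : kron22 A⁻¹ A⁻¹ * K = 1 := by
    rw [hK, kron22_mul, Matrix.nonsing_inv_mul A hdet, kron22_one]
  have hKU : IsUnit K := ⟨⟨K, kron22 A⁻¹ A⁻¹, hKr, hKl⟩, rfl⟩
  have hKinv : K⁻¹ = kron22 A⁻¹ A⁻¹ := Matrix.inv_eq_right_inv hKr
  rw [hKinv] at h1
  have h2 : K * R = R' * K := by
    have h3 := congrArg (· * K) h1
    simpa only [mul_assoc, hKl, mul_one] using h3
  rw [flip_comm] at h2
  have hRR' : R = R' := hKU.mul_left_cancel h2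
  have h4 := congrFun (congrFun hRR' (((0 : Fin 2), (0 : Fin 2)) : V2)) (((0 : Fin 2), (0 : Fin 2)) : V2)
  have h5 : toFin4 (((0 : Fin 2), (0 : Fin 2)) : V2) = 0 := rfl
  simp only [R, R', lift4, h5] at h4
  norm_num at h4
end
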